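/- Let (K, |·|) be a spherically complete nonarchimedean valued field and let E be a finite-dimensional K-vector space equipped with an ultrametric vector seminorm p. Then every one-dimensional vector subspace D of E has an orthocomplement in E: there is a subspace H with D ⊕ H = E such that the projection P_D : E → D along H satisfies p(P_D(x)) ≤ p(x) for all x ∈ E. -/

import Mathlib

/-!
Let `e` span `D`. If `f` is a functional with `f e = 1` and `v (f x) * p e ≤ p x`, then
`H = ker f` works, the projection being `x ↦ f x • e`. Such an `f` comes from Ingleton's
nonarchimedean Hahn–Banach theorem: to extend a functional `f` bounded by `p` on `F` to
`F ⊔ K ∙ y`, one needs a value `a` at `y` with `v (a + f x) ≤ p (x + y)` for all `x ∈ F`.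
These conditions are closed balls which, by the ultrametric inequality, form a chain, so
spherical completeness provides `a`. In finite dimension the extension steps reach `E`.
-/

def IsClosedBall {K : Type*} [Field K] (v : AbsoluteValue K ℝ) (s : Set K) : Prop :=
  ∃ (c : K) (r : ℝ), 0 ≤ r ∧ s = {x : K | v (x - c) ≤ r}

def SphericallyComplete {K : Type*} [Field K] (v : AbsoluteValue K ℝ) : Prop :=
  ∀ B : Set (Set K), (∀ b ∈ B, IsClosedBall v b) → IsChain (· ⊆ ·) B → (⋂₀ B).Nonempty

theorem LinearMap.exists_eqOn_and_apply_eq_of_notMem {K E V : Type*} [Field K] [AddCommGroup E]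
    [Module K E] [AddCommGroup V] [Module K V] {F : Submodule K E} (f : E →ₗ[K] V) {y : E}
    (hy : y ∉ F) (a : V) : ∃ g : E →ₗ[K] V, Set.EqOn g f F ∧ g y = a := by
  have hy' : (Submodule.Quotient.mk y : E ⧸ F) ≠ 0 := by simpa using hy
  obtain ⟨φ, hφ⟩ := Module.Projective.exists_dual_eq_one K hy'
  refine ⟨f + (φ ∘ₗ F.mkQ).smulRight (a - f y), fun x hx => ?_, ?_⟩
  · simp [(Submodule.Quotient.mk_eq_zero F).2 hx]
  · simp [hφ]

structure IsUltrametricSeminorm {K E : Type*} [Field K] [AddCommGroup E] [Module K E]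
    (v : AbsoluteValue K ℝ) (p : E → ℝ) : Prop where
  map_smul : ∀ (c : K) (x : E), p (c • x) = v c * p x
  isNonarchimedean : IsNonarchimedean p

namespace IsUltrametricSeminorm

variable {K E : Type*} [Field K] [AddCommGroup E] [Module K E]
  {v : AbsoluteValue K ℝ} {p : E → ℝ}

theorem map_zero (hp : IsUltrametricSeminorm v p) : p 0 = 0 := by
  simpa using hp.map_smul 0 0

theorem map_neg (hp : IsUltrametricSeminorm v p) (x : E) : p (-x) = p x := by
  simpa using hp.map_smul (-1) x

theorem nonneg (hp : IsUltrametricSeminorm v p) (x : E) : 0 ≤ p x := by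
  simpa [hp.map_zero, hp.map_neg] using hp.isNonarchimedean x (-x)

theorem map_sub_le_max (hp : IsUltrametricSeminorm v p) (x y : E) :
    p (x - y) ≤ max (p x) (p y) := by
  simpa [sub_eq_add_neg, hp.map_neg] using hp.isNonarchimedean x (-y)

theorem div_const (hp : IsUltrametricSeminorm v p) {r : ℝ} (hr : 0 ≤ r) :
    IsUltrametricSeminorm v (fun x => p x / r) where
  map_smul c x := by rw [hp.map_smul, mul_div_assoc]
  isNonarchimedean x y := by
    simpa only [max_div_div_right hr] using div_le_div_of_nonneg_right (hp.isNonarchimedean x y) hr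

open Submodule

variable (hv : IsNonarchimedean v) (hp : IsUltrametricSeminorm v p)
  {F : Submodule K E} {f : E →ₗ[K] K}
include hv hp

theorem ball_subset_ball_of_le (hf : ∀ x ∈ F, v (f x) ≤ p x) (y : E) {x₁ x₂ : E}
    (hx₁ : x₁ ∈ F) (hx₂ : x₂ ∈ F) (hle : p (x₁ + y) ≤ p (x₂ + y)) :
    {a : K | v (a + f x₁) ≤ p (x₁ + y)} ⊆ {a : K | v (a + f x₂) ≤ p (x₂ + y)} := by
  intro a ha
  have hdiff : v (f x₂ - f x₁) ≤ p (x₂ + y) := calc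
    v (f x₂ - f x₁) = v (f (x₂ - x₁)) := by rw [f.map_sub]
    _ ≤ p ((x₂ + y) - (x₁ + y)) := by
      rw [add_sub_add_right_eq_sub]; exact hf _ (F.sub_mem hx₂ hx₁)
    _ ≤ p (x₂ + y) := (hp.map_sub_le_max _ _).trans (max_le le_rfl hle)
  calc v (a + f x₂) = v ((a + f x₁) + (f x₂ - f x₁)) := by ring_nf
    _ ≤ max (v (a + f x₁)) (v (f x₂ - f x₁)) := hv _ _
    _ ≤ p (x₂ + y) := max_le (ha.trans hle) hdiff

theorem exists_forall_le_of_sphericallyComplete (hsc : SphericallyComplete v)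
    (hf : ∀ x ∈ F, v (f x) ≤ p x) (y : E) :
    ∃ a : K, ∀ x ∈ F, v (a + f x) ≤ p (x + y) := by
  set B := (fun x => {a : K | v (a + f x) ≤ p (x + y)}) '' (F : Set E)
  have hball : ∀ b ∈ B, IsClosedBall v b := by
    rintro _ ⟨x, -, rfl⟩
    exact ⟨-f x, p (x + y), hp.nonneg _, by simp⟩
  have hchain : IsChain (· ⊆ ·) B := by
    rintro _ ⟨x₁, hx₁, rfl⟩ _ ⟨x₂, hx₂, rfl⟩ -
    rcases le_total (p (x₁ + y)) (p (x₂ + y)) with h | h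
    · exact Or.inl (ball_subset_ball_of_le hv hp hf y hx₁ hx₂ h)
    · exact Or.inr (ball_subset_ball_of_le hv hp hf y hx₂ hx₁ h)
  obtain ⟨a, ha⟩ := hsc B hball hchain
  exact ⟨a, fun x hx => ha _ ⟨x, hx, rfl⟩⟩

theorem exists_extend_sup_span (hsc : SphericallyComplete v) (hf : ∀ x ∈ F, v (f x) ≤ p x)
    {y : E} (hy : y ∉ F) :
    ∃ g : E →ₗ[K] K, Set.EqOn g f F ∧ ∀ x ∈ F ⊔ K ∙ y, v (g x) ≤ p x := by
  obtain ⟨a, ha⟩ := exists_forall_le_of_sphericallyComplete hv hp hsc hf y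
  obtain ⟨g, hgf, hgy⟩ := LinearMap.exists_eqOn_and_apply_eq_of_notMem f hy a
  refine ⟨g, hgf, fun _ hz => ?_⟩
  obtain ⟨x, hx, _, hcy, rfl⟩ := mem_sup.1 hz
  obtain ⟨c, rfl⟩ := mem_span_singleton.1 hcy
  rcases eq_or_ne c 0 with rfl | hc
  · simpa [hgf hx] using hf x hx
  have hgxy : g (x + c • y) = c * (a + f (c⁻¹ • x)) := by
    rw [g.map_add, g.map_smul, hgf hx, hgy, f.map_smul, smul_eq_mul, smul_eq_mul, mul_add,
      mul_inv_cancel_left₀ hc, add_comm]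
  calc v (g (x + c • y)) = v c * v (a + f (c⁻¹ • x)) := by rw [hgxy, map_mul]
    _ ≤ v c * p (c⁻¹ • x + y) := mul_le_mul_of_nonneg_left (ha _ (F.smul_mem _ hx)) (v.nonneg c)
    _ = p (x + c • y) := by rw [← hp.map_smul c, smul_add, smul_inv_smul₀ hc]

theorem exists_extend [FiniteDimensional K E] (hsc : SphericallyComplete v)
    (hf : ∀ x ∈ F, v (f x) ≤ p x) : ∃ g : E →ₗ[K] K, Set.EqOn g f F ∧ ∀ x, v (g x) ≤ p x := by
  induction F using WellFoundedGT.induction generalizing f with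
  | _ F ih =>
  by_cases hF : F = ⊤
  · subst hF
    exact ⟨f, Set.eqOn_refl _ _, fun x => hf x mem_top⟩
  obtain ⟨y, hy⟩ : ∃ y, y ∉ F := by
    contrapose! hF
    exact eq_top_iff'.2 hF
  obtain ⟨g, hgf, hg⟩ := exists_extend_sup_span hv hp hsc hf hy
  obtain ⟨h, hhg, hh⟩ := ih _ (lt_sup_iff_notMem.2 hy) hg
  exact ⟨h, fun x hx => (hhg (mem_sup_left hx)).trans (hgf hx), hh⟩

theorem exists_dual_apply_eq_one_and_smul_le [FiniteDimensional K E]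
    (hsc : SphericallyComplete v) {e : E} (he : e ≠ 0) :
    ∃ f : E →ₗ[K] K, f e = 1 ∧ ∀ x, p (f x • e) ≤ p x := by
  obtain ⟨f₀, hf₀⟩ := Module.Projective.exists_dual_eq_one K he
  rcases (hp.nonneg e).eq_or_lt with hpe | hpe
  · exact ⟨f₀, hf₀, fun x => by rw [hp.map_smul, ← hpe, mul_zero]; exact hp.nonneg x⟩
  have hf₀_le : ∀ x ∈ K ∙ e, v (f₀ x) ≤ p x / p e := by
    intro x hx
    obtain ⟨c, rfl⟩ := mem_span_singleton.1 hx
    rw [hp.map_smul, mul_div_cancel_right₀ _ hpe.ne', f₀.map_smul, smul_eq_mul, hf₀, mul_one]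
  obtain ⟨f, hff₀, hf⟩ := (hp.div_const (hp.nonneg e)).exists_extend hv hsc hf₀_le
  refine ⟨f, (hff₀ (mem_span_singleton_self e)).trans hf₀, fun x => ?_⟩
  rw [hp.map_smul, ← le_div_iff₀ hpe]
  exact hf x

end IsUltrametricSeminorm

/-- Let `(K, v)` be a spherically complete nonarchimedean valued field
and let `E` be a finite-dimensional `K`-vector space equipped with an ultrametric vector
seminorm `p`.  Then every one-dimensional vector subspace `D` of `E` has an
orthocomplement in `E`: a subspace `H` with `D ⊕ H = E` such that the projection
`P_D : E → D` along `H` satisfies `p (P_D x) ≤ p x` for all `x : E`. -/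
theorem one_dim_subspace_has_orthocomplement (K : Type u) [Field K]
    (v : AbsoluteValue K ℝ)
    (hna : ∀ x y : K, v (x + y) ≤ max (v x) (v y))
    (hsc : SphericallyComplete v)
    (E : Type w) [AddCommGroup E] [Module K E] [FiniteDimensional K E] (p : E → ℝ)
    (hp_smul : ∀ (c : K) (x : E), p (c • x) = v c * p x)
    (hp_ultra : ∀ x y : E, p (x + y) ≤ max (p x) (p y))
    (D : Submodule K E) (hD : Module.finrank K D = 1) :
    ∃ (H : Submodule K E) (h : IsCompl D H),
      ∀ x : E, p (D.linearProjOfIsCompl H h x : E) ≤ p x := by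
  have hp : IsUltrametricSeminorm v p := ⟨hp_smul, hp_ultra⟩
  obtain ⟨e, he, hspan⟩ := finrank_eq_one_iff'.1 hD
  obtain ⟨f, hfe, hf⟩ := hp.exists_dual_apply_eq_one_and_smul_le hna hsc (e := (e : E))
    (by simpa using he)
  have hproj : ∀ x : D, f.smulRight e x = x := by
    intro x
    obtain ⟨c, rfl⟩ := hspan x
    simp [hfe]
  refine ⟨LinearMap.ker (f.smulRight e), LinearMap.isCompl_of_proj hproj, fun x => ?_⟩
  -- `linearProjOfIsCompl` is a deprecated alias of `projectionOnto`
  change p (D.projectionOnto _ _ x : E) ≤ p x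
  rw [LinearMap.projectionOnto_of_proj _ hproj]
  exact hf x
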